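/- arXiv:1907.06462 — 2 statements merged into one kernel-verified Lean document; each statement's English description precedes it below -/
import Mathlib

section
/- Smart rounding minimizes the Chebyshev distance to the feasible binary set: for u ∈ [0,1]^l with ∑ u_i ≤ S and any z ∈ {0,1}^l with ∑ z_i ≤ S, it holds ‖u − [u]_{SR}‖_∞ ≤ ‖u − z‖_∞. -/
theorem stmt_12 (l S : ℕ) (hS : 1 ≤ S) (hSl : S ≤ l) (u : Fin l → ℝ)
    (hu : ∀ i, u i ∈ Set.Icc (0:ℝ) 1)
    (hsum : (∑ i, u i) ≤ (S:ℝ))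
    (IS : Finset (Fin l)) (hcard : IS.card = S)
    (hlargest : ∀ i ∈ IS, ∀ j ∉ IS, u j ≤ u i)
    (z : Fin l → ℝ) (hz : ∀ i, z i = 0 ∨ z i = 1) (hzsum : (∑ i, z i) ≤ (S:ℝ)) :
    ‖u - (fun i => if i ∈ IS then (if (1:ℝ)/2 ≤ u i then (1:ℝ) else 0) else 0)‖
      ≤ ‖u - z‖ := by
  have hd0 : (0:ℝ) ≤ ‖u - z‖ := norm_nonneg _
  rw [pi_norm_le_iff_of_nonneg hd0]
  intro i
  have hzi : ‖(u - z) i‖ ≤ ‖u - z‖ := norm_le_pi_norm _ i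
  simp only [Pi.sub_apply, Real.norm_eq_abs] at hzi ⊢
  obtain ⟨hu0, hu1⟩ := hu i
  by_cases hi : i ∈ IS
  · have key : |u i - (if (1:ℝ)/2 ≤ u i then (1:ℝ) else 0)| ≤ |u i - z i| := by
      rw [← Real.sqrt_sq_eq_abs, ← Real.sqrt_sq_eq_abs]
      apply Real.sqrt_le_sqrt
      rcases hz i with h | h <;> split_ifs with hh <;> rw [h] <;> nlinarith
    simp only [hi, if_true]
    exact key.trans hzi
  · simp only [hi, if_false, sub_zero]
    rw [abs_of_nonneg hu0]
    rcases hz i with h | h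
    · rw [h, sub_zero, abs_of_nonneg hu0] at hzi; exact hzi
    · -- find j ∈ IS with z j = 0
      set J := Finset.univ.filter (fun j => z j = 1) with hJ
      have hsumz : (∑ j, z j) = (J.card : ℝ) := by
        rw [← Finset.sum_filter_add_sum_filter_not Finset.univ (fun j => z j = 1)]
        have h1 : ∑ j ∈ Finset.univ.filter (fun j => z j = 1), z j = (J.card : ℝ) := by
          rw [Finset.sum_congr rfl (fun j hj => (Finset.mem_filter.mp hj).2)]
          simp [hJ]
        have h2 : ∑ j ∈ Finset.univ.filter (fun j => ¬ z j = 1), z j = 0 := by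
          apply Finset.sum_eq_zero
          intro j hj
          rcases hz j with h' | h'
          · exact h'
          · exact absurd h' (Finset.mem_filter.mp hj).2
        rw [h1, h2, add_zero]
      have hJcard : J.card ≤ S := by
        rw [hsumz] at hzsum
        exact_mod_cast hzsum
      have hex : ∃ j ∈ IS, z j = 0 := by
        by_contra hno
        push_neg at hno
        have hsub : insert i IS ⊆ J := by
          intro k hk
          rcases Finset.mem_insert.mp hk with rfl | hk'
          · exact Finset.mem_filter.mpr ⟨Finset.mem_univ _, h⟩
          · refine Finset.mem_filter.mpr ⟨Finset.mem_univ _, ?_⟩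
            rcases hz k with h' | h'
            · exact absurd h' (hno k hk')
            · exact h'
        have := Finset.card_le_card hsub
        rw [Finset.card_insert_of_notMem hi, hcard] at this
        omega
      obtain ⟨j, hjIS, hj0⟩ := hex
      have hji : u i ≤ u j := hlargest j hjIS i hi
      have hjle : |u j - z j| ≤ ‖u - z‖ := by
        have := norm_le_pi_norm (u - z) j
        simpa [Real.norm_eq_abs] using this
      rw [hj0, sub_zero, abs_of_nonneg (hu j).1] at hjle
      linarith
end

section
/- The smart rounding z̄ = (f([ū]_{SR}), [ū]_{SR}) minimizes the Chebyshev distance from x̄ = (f(ū), ū) to the family of disjoint boxes B(z) centered at feasible binary points: dist_∞(x̄, B(z̄)) ≤ dist_∞(x̄, B(z)) for all z ∈ W. -/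
theorem stmt_16 (l N : ℕ) (hl : 0 < l) (hN : 0 < N) (S : ℕ) (hS : 1 ≤ S) (hSl : S ≤ l)
    (f : (Fin l → ℝ) →ₗ[ℝ] (Fin N → ℝ)) (β : ℝ)
    (hβ : ∀ zu : Fin l → ℝ, (∀ i, zu i = 0 ∨ zu i = 1) → (∑ i, zu i) ≤ (S:ℝ) →
      ‖f zu‖ ≤ β)
    (ub : Fin l → ℝ) (hub : ∀ i, ub i ∈ Set.Icc (0:ℝ) 1)
    (hubsum : (∑ i, ub i) ≤ (S:ℝ))
    (IS : Finset (Fin l)) (hcard : IS.card = S)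
    (hlargest : ∀ i ∈ IS, ∀ j ∉ IS, ub j ≤ ub i)
    (uSR : Fin l → ℝ)
    (huSR : uSR = fun i => if i ∈ IS then (if (1:ℝ)/2 ≤ ub i then (1:ℝ) else 0) else 0) :
    ∀ zu : Fin l → ℝ, (∀ i, zu i = 0 ∨ zu i = 1) → (∑ i, zu i) ≤ (S:ℝ) →
      Metric.infDist ((f ub, ub) : (Fin N → ℝ) × (Fin l → ℝ))
          {p : (Fin N → ℝ) × (Fin l → ℝ) | ‖p.1‖ ≤ β ∧ ‖p.2 - uSR‖ ≤ (0.4:ℝ)}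
        ≤ Metric.infDist ((f ub, ub) : (Fin N → ℝ) × (Fin l → ℝ))
          {p : (Fin N → ℝ) × (Fin l → ℝ) | ‖p.1‖ ≤ β ∧ ‖p.2 - zu‖ ≤ (0.4:ℝ)} := by
  have hβ0 : (0:ℝ) ≤ β := by
    have h := hβ (fun _ => 0) (fun i => Or.inl rfl) (by simp)
    have h0 : (fun _ : Fin l => (0:ℝ)) = (0 : Fin l → ℝ) := rfl
    rw [h0, map_zero, norm_zero] at h
    exact h
  intro zu hzu hzsum
  -- key: ‖ub - uSR‖ ≤ ‖ub - zu‖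
  have hcoordz : ∀ j, |ub j - zu j| ≤ ‖ub - zu‖ := fun j => by
    simpa [Real.norm_eq_abs] using norm_le_pi_norm (ub - zu) j
  have key : ‖ub - uSR‖ ≤ ‖ub - zu‖ := by
    rw [pi_norm_le_iff_of_nonneg (norm_nonneg _)]
    intro i
    obtain ⟨h0, h1⟩ := hub i
    rw [Real.norm_eq_abs, Pi.sub_apply, huSR]
    by_cases hi : i ∈ IS
    · simp only [hi, if_true]
      by_cases hhalf : (1:ℝ)/2 ≤ ub i
      · simp only [hhalf, if_true]
        refine le_trans ?_ (hcoordz i)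
        rcases hzu i with h | h <;> rw [h] <;> rw [abs_of_nonpos (by linarith), abs_of_nonneg (by linarith)] <;> linarith
      · push_neg at hhalf
        simp only [hhalf.not_ge, if_false]
        refine le_trans ?_ (hcoordz i)
        rcases hzu i with h | h
        · simp [h]
        · rw [h, sub_zero, abs_of_nonneg h0, abs_of_nonpos (by linarith)]
          linarith
    · simp only [hi, if_false, sub_zero, abs_of_nonneg h0]
      rcases hzu i with h | h
      · refine le_trans ?_ (hcoordz i)
        rw [h, sub_zero, abs_of_nonneg h0]
      · by_cases hhalf : ub i ≤ 1/2
        · refine le_trans ?_ (hcoordz i)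
          rw [h, abs_of_nonpos (by linarith)]; linarith
        · push_neg at hhalf
          -- there exists j ∈ IS with zu j = 0
          have hexists : ∃ j ∈ IS, zu j = 0 := by
            by_contra hcon
            push_neg at hcon
            have hall : ∀ j ∈ IS, zu j = 1 := by
              intro j hj
              rcases hzu j with h' | h'
              · exact absurd h' (hcon j hj)
              · exact h'
            have hsub : insert i IS ⊆ Finset.univ := Finset.subset_univ _
            have hnn : ∀ j ∈ Finset.univ, j ∉ insert i IS → (0:ℝ) ≤ zu j := by
              intro j _ _
              rcases hzu j with h' | h' <;> rw [h'] <;> norm_num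
            have hle : ∑ j ∈ insert i IS, zu j ≤ ∑ j, zu j :=
              Finset.sum_le_sum_of_subset_of_nonneg hsub hnn
            have hins : ∑ j ∈ insert i IS, zu j = zu i + ∑ j ∈ IS, zu j :=
              Finset.sum_insert hi
            have hsumIS : ∑ j ∈ IS, zu j = (S:ℝ) := by
              rw [Finset.sum_congr rfl hall]
              simp [hcard]
            rw [hins, h, hsumIS] at hle
            linarith
          obtain ⟨j, hj, hzj⟩ := hexists
          have hji : ub i ≤ ub j := hlargest j hj i hi
          refine le_trans hji (le_trans ?_ (hcoordz j))
          rw [hzj, sub_zero, abs_of_nonneg (hub j).1]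
  -- now the infDist argument
  set x : (Fin N → ℝ) × (Fin l → ℝ) := (f ub, ub) with hx
  set A : Set ((Fin N → ℝ) × (Fin l → ℝ)) :=
    {p | ‖p.1‖ ≤ β ∧ ‖p.2 - uSR‖ ≤ (0.4:ℝ)} with hA
  set B : Set ((Fin N → ℝ) × (Fin l → ℝ)) :=
    {p | ‖p.1‖ ≤ β ∧ ‖p.2 - zu‖ ≤ (0.4:ℝ)} with hB
  have hBne : B.Nonempty := ⟨(0, zu), ⟨by simpa using hβ0, by simp; norm_num⟩⟩
  have main : ∀ p ∈ B, Metric.infDist x A ≤ dist x p := by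
    intro p hp
    obtain ⟨hp1, hp2⟩ := hp
    have hd2 : dist ub p.2 = ‖ub - p.2‖ := dist_eq_norm _ _
    have hdistx : dist x p = max (dist (f ub) p.1) (dist ub p.2) := rfl
    by_cases hcase : ‖ub - uSR‖ ≤ (0.4:ℝ)
    · have hmem : ((p.1, ub) : (Fin N → ℝ) × (Fin l → ℝ)) ∈ A := ⟨hp1, hcase⟩
      refine le_trans (Metric.infDist_le_dist_of_mem hmem) ?_
      have : dist x ((p.1, ub) : (Fin N → ℝ) × (Fin l → ℝ))
          = max (dist (f ub) p.1) (dist ub ub) := rfl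
      rw [this, hdistx, dist_self]
      exact max_le_max le_rfl dist_nonneg
    · push_neg at hcase
      set n : ℝ := ‖ub - uSR‖ with hn
      have hnpos : (0:ℝ) < n := lt_trans (by norm_num) hcase
      set t : ℝ := (0.4:ℝ) / n with ht
      set q2 : Fin l → ℝ := uSR + t • (ub - uSR) with hq2
      have htpos : 0 < t := by positivity
      have ht1 : t ≤ 1 := by
        rw [ht, div_le_one hnpos]; linarith
      have hqu : ‖q2 - uSR‖ = (0.4:ℝ) := by
        rw [hq2]
        simp only [add_sub_cancel_left, norm_smul, Real.norm_eq_abs,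
          abs_of_pos htpos, ← hn, ht]
        rw [abs_of_pos (div_pos (by norm_num) hnpos)]
        field_simp
      have hubq : ‖ub - q2‖ = n - 0.4 := by
        have : ub - q2 = (1 - t) • (ub - uSR) := by
          rw [hq2]; ext i; simp [sub_smul]; ring
        rw [this, norm_smul, Real.norm_eq_abs, abs_of_nonneg (by linarith), ← hn, ht]
        field_simp
      have hmem : ((p.1, q2) : (Fin N → ℝ) × (Fin l → ℝ)) ∈ A :=
        ⟨hp1, le_of_eq hqu⟩
      refine le_trans (Metric.infDist_le_dist_of_mem hmem) ?_
      have heq : dist x ((p.1, q2) : (Fin N → ℝ) × (Fin l → ℝ))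
          = max (dist (f ub) p.1) (dist ub q2) := rfl
      rw [heq, hdistx]
      refine max_le_max le_rfl ?_
      have hbound : n ≤ ‖ub - p.2‖ + 0.4 := by
        have htri : ‖ub - zu‖ ≤ ‖ub - p.2‖ + ‖p.2 - zu‖ := by
          have : ub - zu = (ub - p.2) + (p.2 - zu) := by ring
          rw [this]; exact norm_add_le _ _
        rw [hn]
        exact le_trans key (le_trans htri (by linarith))
      rw [dist_eq_norm, hubq, hd2]
      linarith
  -- conclude
  have : Metric.infDist x B = ⨅ y : B, dist x y := Metric.infDist_eq_iInf
  rw [this]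
  have : Nonempty B := hBne.to_subtype
  exact le_ciInf fun y => main y y.2
end
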